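/- Suppose there is a constant C such that ‖S_{m}^{α,β}(g,·)‖_{L^p(μ^{α,β})} ≤ C‖g‖_{L^p(μ^{α,β})} for all g ∈ L^p(μ^{α,β}) and all m ≥ 0 (uniform boundedness of Jacobi–Fourier partial sums). Then the Fourier–Sobolev partial sums satisfy ‖S_n^S(f,·)‖_{S,p} ≤ max{1, C}·‖f‖_{S,p} for all f in the Sobolev space and all n ≥ 0, where ‖f‖_{S,p}^p = Σ_{k=0}^{ℓ-1}|f^{(k)}(ω_k)|^p + ∫_{-1}^1 |f^{(ℓ)}|^p dμ^{α,β}. -/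

import Mathlib

open Set MeasureTheory Finset

/-- The Jacobi weight. -/
noncomputable def jacW (α β x : ℝ) : ℝ := (1 - x) ^ α * (1 + x) ^ β

/-- The discrete-continuous Jacobi-Sobolev inner product. -/
noncomputable def sobIP (α β : ℝ) (ℓ : ℕ) (ω : ℕ → ℝ) (f g : ℝ → ℝ) : ℝ :=
  (∑ k ∈ Finset.range ℓ, iteratedDeriv k f (ω k) * iteratedDeriv k g (ω k)) +
    ∫ x in Set.Ioo (-1 : ℝ) 1, iteratedDeriv ℓ f x * iteratedDeriv ℓ g x * jacW α β x

/-- The `n`-th partial sum of the Fourier–Sobolev series of `f`. -/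
noncomputable def sobPartialSum (α β : ℝ) (ℓ : ℕ) (ω : ℕ → ℝ) (q : ℕ → ℝ → ℝ)
    (f : ℝ → ℝ) (n : ℕ) : ℝ → ℝ :=
  fun x => ∑ k ∈ Finset.range (n + 1), sobIP α β ℓ ω f (q k) * q k x

/-- The `j`-th Jacobi–Fourier coefficient of `g`. -/
noncomputable def jacCoef (α β : ℝ) (jp : ℕ → Polynomial ℝ) (g : ℝ → ℝ) (j : ℕ) : ℝ :=
  ∫ x in Set.Ioo (-1 : ℝ) 1, g x * (jp j).eval x * jacW α β x

/-- The `m`-th partial sum of the Jacobi–Fourier series of `g`. -/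
noncomputable def jacPartialSum (α β : ℝ) (jp : ℕ → Polynomial ℝ) (g : ℝ → ℝ)
    (m : ℕ) : ℝ → ℝ :=
  fun x => ∑ j ∈ Finset.range (m + 1), jacCoef α β jp g j * (jp j).eval x

/-- The `L^p(μ^{α,β})` norm. -/
noncomputable def jacNorm (α β p : ℝ) (g : ℝ → ℝ) : ℝ :=
  (∫ x in Set.Ioo (-1 : ℝ) 1, |g x| ^ p * jacW α β x) ^ (1 / p)

/-- The discrete-continuous Jacobi-Sobolev norm of type `p`. -/
noncomputable def sobNorm (α β p : ℝ) (ℓ : ℕ) (ω : ℕ → ℝ) (f : ℝ → ℝ) : ℝ :=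
  ((∑ k ∈ Finset.range ℓ, |iteratedDeriv k f (ω k)| ^ p) +
    ∫ x in Set.Ioo (-1 : ℝ) 1, |iteratedDeriv ℓ f x| ^ p * jacW α β x) ^ (1 / p)

/-!
The Sobolev coefficients of `f` against `q₀, …, q_{ℓ-1}` are the node values `f^{(k)}(ω_k)`,
and those against `q_m` with `m ≥ ℓ` are the Jacobi coefficients of `f^{(ℓ)}`. Hence `S_n^S f`
reproduces (for `n ≥ ℓ`) or truncates (for `n < ℓ`) the node values of `f`, while its `ℓ`-th
derivative is `S_{n-ℓ}^{α,β} f^{(ℓ)}` (resp. `0`). The discrete part of the Sobolev norm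
therefore does not grow, and the continuous part grows at most by the factor `C`.
-/

lemma jacW_nonneg (α β : ℝ) {x : ℝ} (hx : x ∈ Ioo (-1 : ℝ) 1) : 0 ≤ jacW α β x :=
  mul_nonneg (Real.rpow_nonneg (by linarith [hx.2]) _) (Real.rpow_nonneg (by linarith [hx.1]) _)

lemma integral_abs_rpow_mul_jacW_nonneg (α β p : ℝ) (g : ℝ → ℝ) :
    0 ≤ ∫ x in Ioo (-1 : ℝ) 1, |g x| ^ p * jacW α β x :=
  setIntegral_nonneg measurableSet_Ioo fun _ hx =>
    mul_nonneg (Real.rpow_nonneg (abs_nonneg _) _) (jacW_nonneg α β hx)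

lemma jacNorm_nonneg (α β p : ℝ) (g : ℝ → ℝ) : 0 ≤ jacNorm α β p g :=
  Real.rpow_nonneg (integral_abs_rpow_mul_jacW_nonneg α β p g) _

lemma jacNorm_zero (α β : ℝ) {p : ℝ} (hp : 0 < p) : jacNorm α β p 0 = 0 := by
  simp [jacNorm, Real.zero_rpow hp.ne', Real.zero_rpow (inv_pos.mpr hp).ne']

lemma Real.rpow_one_div_le_mul_rpow_one_div_iff {a b M p : ℝ} (ha : 0 ≤ a) (hb : 0 ≤ b)
    (hM : 0 ≤ M) (hp : 0 < p) : a ^ (1 / p) ≤ M * b ^ (1 / p) ↔ a ≤ M ^ p * b := by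
  have hMp : M = (M ^ p) ^ (1 / p) := by rw [one_div, Real.rpow_rpow_inv hM hp.ne']
  rw [hMp, ← Real.mul_rpow (Real.rpow_nonneg hM _) hb, ← hMp,
    Real.rpow_le_rpow_iff ha (mul_nonneg (Real.rpow_nonneg hM _) hb) (one_div_pos.mpr hp)]

lemma sobNorm_le_mul_of_le {α β p M : ℝ} {ℓ : ℕ} {ω : ℕ → ℝ} {f g : ℝ → ℝ} (hp : 0 < p)
    (hM : 1 ≤ M) (hnode : ∀ k < ℓ, |iteratedDeriv k g (ω k)| ≤ |iteratedDeriv k f (ω k)|)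
    (htop : jacNorm α β p (iteratedDeriv ℓ g) ≤ M * jacNorm α β p (iteratedDeriv ℓ f)) :
    sobNorm α β p ℓ ω g ≤ M * sobNorm α β p ℓ ω f := by
  have hM0 : 0 ≤ M := zero_le_one.trans hM
  have hMp : 1 ≤ M ^ p := Real.one_le_rpow hM hp.le
  have hIg := integral_abs_rpow_mul_jacW_nonneg α β p (iteratedDeriv ℓ g)
  have hIf := integral_abs_rpow_mul_jacW_nonneg α β p (iteratedDeriv ℓ f)
  have hAf : 0 ≤ ∑ k ∈ range ℓ, |iteratedDeriv k f (ω k)| ^ p :=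
    sum_nonneg fun k _ => Real.rpow_nonneg (abs_nonneg _) _
  have hAg : ∑ k ∈ range ℓ, |iteratedDeriv k g (ω k)| ^ p ≤
      ∑ k ∈ range ℓ, |iteratedDeriv k f (ω k)| ^ p :=
    sum_le_sum fun k hk =>
      Real.rpow_le_rpow (abs_nonneg _) (hnode k (mem_range.mp hk)) hp.le
  rw [jacNorm, jacNorm, Real.rpow_one_div_le_mul_rpow_one_div_iff hIg hIf hM0 hp] at htop
  rw [sobNorm, sobNorm, Real.rpow_one_div_le_mul_rpow_one_div_iff
    (add_nonneg ((sum_nonneg fun k _ => Real.rpow_nonneg (abs_nonneg _) _)) hIg)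
    (add_nonneg hAf hIf) hM0 hp, mul_add]
  exact add_le_add (hAg.trans (le_mul_of_one_le_left hAf hMp)) htop

section FourierSobolev

variable {α β : ℝ} {ℓ : ℕ} {ω : ℕ → ℝ} {q : ℕ → ℝ → ℝ}

lemma iteratedDeriv_sobPartialSum (hq : ∀ m, ContDiff ℝ (⊤ : ℕ∞) (q m)) (f : ℝ → ℝ) (n k : ℕ)
    (x : ℝ) : iteratedDeriv k (sobPartialSum α β ℓ ω q f n) x =
      ∑ m ∈ range (n + 1), sobIP α β ℓ ω f (q m) * iteratedDeriv k (q m) x := by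
  unfold sobPartialSum
  rw [iteratedDeriv_fun_sum fun m _ =>
    (contDiff_const.mul ((hq m).of_le (mod_cast le_top))).contDiffAt]
  simp only [iteratedDeriv_const_mul_field]

lemma sobIP_eq_iteratedDeriv_of_lt {m : ℕ} (hm : m < ℓ)
    (hder : ∀ k < ℓ, iteratedDeriv k (q m) (ω k) = if k = m then 1 else 0)
    (htop : ∀ x, iteratedDeriv ℓ (q m) x = 0) (f : ℝ → ℝ) :
    sobIP α β ℓ ω f (q m) = iteratedDeriv m f (ω m) := by
  rw [sobIP, sum_congr rfl fun k hk => by rw [hder k (mem_range.mp hk)]]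
  simp [htop, hm]

lemma sobIP_eq_jacCoef {m j : ℕ} {jp : ℕ → Polynomial ℝ}
    (hder : ∀ k < ℓ, iteratedDeriv k (q m) (ω k) = 0)
    (htop : ∀ x, iteratedDeriv ℓ (q m) x = (jp j).eval x) (f : ℝ → ℝ) :
    sobIP α β ℓ ω f (q m) = jacCoef α β jp (iteratedDeriv ℓ f) j := by
  rw [sobIP, sum_eq_zero fun k hk => by rw [hder k (mem_range.mp hk), mul_zero]]
  simp only [htop, zero_add, jacCoef]

lemma iteratedDeriv_sobPartialSum_node (hq : ∀ m, ContDiff ℝ (⊤ : ℕ∞) (q m))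
    (hq_low_der : ∀ n < ℓ, ∀ k < ℓ, iteratedDeriv k (q n) (ω k) = if k = n then 1 else 0)
    (hq_low_top : ∀ n < ℓ, ∀ x : ℝ, iteratedDeriv ℓ (q n) x = 0)
    (hq_high_der : ∀ n, ℓ ≤ n → ∀ k < ℓ, iteratedDeriv k (q n) (ω k) = 0)
    (f : ℝ → ℝ) (n : ℕ) {k : ℕ} (hk : k < ℓ) :
    iteratedDeriv k (sobPartialSum α β ℓ ω q f n) (ω k) =
      if k ≤ n then iteratedDeriv k f (ω k) else 0 := by
  have hterm : ∀ m, sobIP α β ℓ ω f (q m) * iteratedDeriv k (q m) (ω k) =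
      if m = k then iteratedDeriv k f (ω k) else 0 := by
    intro m
    rcases lt_or_ge m ℓ with hm | hm
    · rw [hq_low_der m hm k hk,
        sobIP_eq_iteratedDeriv_of_lt hm (hq_low_der m hm) (hq_low_top m hm)]
      rcases eq_or_ne m k with rfl | hmk
      · simp
      · simp [hmk, hmk.symm]
    · rw [hq_high_der m hm k hk, mul_zero, if_neg (by omega)]
  simp only [iteratedDeriv_sobPartialSum hq, hterm, sum_ite_eq', Finset.mem_range,
    Nat.lt_add_one_iff]

lemma iteratedDeriv_sobPartialSum_of_lt (hq : ∀ m, ContDiff ℝ (⊤ : ℕ∞) (q m))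
    (hq_low_top : ∀ n < ℓ, ∀ x : ℝ, iteratedDeriv ℓ (q n) x = 0)
    (f : ℝ → ℝ) {n : ℕ} (hn : n < ℓ) :
    iteratedDeriv ℓ (sobPartialSum α β ℓ ω q f n) = 0 := by
  funext x
  rw [iteratedDeriv_sobPartialSum hq]
  exact sum_eq_zero fun m hm => by
    rw [hq_low_top m (by rw [Finset.mem_range] at hm; omega), mul_zero]

lemma iteratedDeriv_sobPartialSum_of_le {jp : ℕ → Polynomial ℝ}
    (hq : ∀ m, ContDiff ℝ (⊤ : ℕ∞) (q m))
    (hq_low_top : ∀ n < ℓ, ∀ x : ℝ, iteratedDeriv ℓ (q n) x = 0)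
    (hq_high_der : ∀ n, ℓ ≤ n → ∀ k < ℓ, iteratedDeriv k (q n) (ω k) = 0)
    (hq_high_top : ∀ n, ℓ ≤ n → ∀ x : ℝ, iteratedDeriv ℓ (q n) x = (jp (n - ℓ)).eval x)
    (f : ℝ → ℝ) {n : ℕ} (hn : ℓ ≤ n) :
    iteratedDeriv ℓ (sobPartialSum α β ℓ ω q f n) =
      jacPartialSum α β jp (iteratedDeriv ℓ f) (n - ℓ) := by
  funext x
  have hhigh : ∀ j, ℓ ≤ ℓ + j := fun j => Nat.le_add_right ℓ j
  have hjp : ∀ j, jp (ℓ + j - ℓ) = jp j := fun j => by rw [Nat.add_sub_cancel_left]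
  rw [iteratedDeriv_sobPartialSum hq, show n + 1 = ℓ + (n - ℓ + 1) by omega, sum_range_add,
    sum_eq_zero fun m hm => by rw [hq_low_top m (mem_range.mp hm), mul_zero], zero_add,
    jacPartialSum]
  refine sum_congr rfl fun j _ => ?_
  have htop : ∀ x, iteratedDeriv ℓ (q (ℓ + j)) x = (jp j).eval x := fun x => by
    rw [hq_high_top _ (hhigh j), hjp]
  rw [htop, sobIP_eq_jacCoef (hq_high_der _ (hhigh j)) htop]

end FourierSobolev

theorem stmt_16_general (α β p : ℝ) (hp : 1 ≤ p)
    (ℓ : ℕ) (ω : ℕ → ℝ) (jp : ℕ → Polynomial ℝ) (q : ℕ → ℝ → ℝ)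
    (hq_poly : ∀ n, ∃ P : Polynomial ℝ, q n = fun x => P.eval x)
    (hq_low_der : ∀ n < ℓ, ∀ k < ℓ,
      iteratedDeriv k (q n) (ω k) = if k = n then 1 else 0)
    (hq_low_top : ∀ n < ℓ, ∀ x : ℝ, iteratedDeriv ℓ (q n) x = 0)
    (hq_high_der : ∀ n, ℓ ≤ n → ∀ k < ℓ, iteratedDeriv k (q n) (ω k) = 0)
    (hq_high_top : ∀ n, ℓ ≤ n → ∀ x : ℝ,
      iteratedDeriv ℓ (q n) x = (jp (n - ℓ)).eval x)
    (C : ℝ)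
    (hC : ∀ g : ℝ → ℝ,
      IntegrableOn (fun x : ℝ => |g x| ^ p * jacW α β x) (Set.Ioo (-1 : ℝ) 1) →
      ∀ m : ℕ, jacNorm α β p (jacPartialSum α β jp g m) ≤ C * jacNorm α β p g)
    (f : ℝ → ℝ)
    (hfp : IntegrableOn (fun x : ℝ => |iteratedDeriv ℓ f x| ^ p * jacW α β x)
      (Set.Ioo (-1 : ℝ) 1)) :
    ∀ n : ℕ, sobNorm α β p ℓ ω (sobPartialSum α β ℓ ω q f n) ≤
      max 1 C * sobNorm α β p ℓ ω f := by
  intro n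
  have hp0 : 0 < p := zero_lt_one.trans_le hp
  have hq : ∀ m, ContDiff ℝ (⊤ : ℕ∞) (q m) := fun m => by
    obtain ⟨P, hP⟩ := hq_poly m
    rw [hP]
    exact Polynomial.contDiff_aeval P _
  have hM : 1 ≤ max 1 C := le_max_left 1 C
  refine sobNorm_le_mul_of_le hp0 hM (fun k hk => ?_) ?_
  · rw [iteratedDeriv_sobPartialSum_node hq hq_low_der hq_low_top hq_high_der f n hk]
    split_ifs
    · exact le_rfl
    · simp
  · rcases lt_or_ge n ℓ with hn | hn
    · rw [iteratedDeriv_sobPartialSum_of_lt hq hq_low_top f hn, jacNorm_zero α β hp0]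
      exact mul_nonneg (zero_le_one.trans hM) (jacNorm_nonneg α β p _)
    · rw [iteratedDeriv_sobPartialSum_of_le hq hq_low_top hq_high_der hq_high_top f hn]
      exact (hC _ hfp _).trans
        (mul_le_mul_of_nonneg_right (le_max_right 1 C) (jacNorm_nonneg α β p _))

theorem stmt_16 (α β p : ℝ) (hα : -1 < α) (hβ : -1 < β) (hp : 1 ≤ p)
    (ℓ : ℕ) (hℓ : 1 ≤ ℓ) (ω : ℕ → ℝ) (jp : ℕ → Polynomial ℝ) (q : ℕ → ℝ → ℝ)
    (hq_poly : ∀ n, ∃ P : Polynomial ℝ, q n = fun x => P.eval x)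
    (hq_low_der : ∀ n < ℓ, ∀ k < ℓ,
      iteratedDeriv k (q n) (ω k) = if k = n then 1 else 0)
    (hq_low_top : ∀ n < ℓ, ∀ x : ℝ, iteratedDeriv ℓ (q n) x = 0)
    (hq_high_der : ∀ n, ℓ ≤ n → ∀ k < ℓ, iteratedDeriv k (q n) (ω k) = 0)
    (hq_high_top : ∀ n, ℓ ≤ n → ∀ x : ℝ,
      iteratedDeriv ℓ (q n) x = (jp (n - ℓ)).eval x)
    (C : ℝ)
    (hC : ∀ g : ℝ → ℝ,
      IntegrableOn (fun x : ℝ => |g x| ^ p * jacW α β x) (Set.Ioo (-1 : ℝ) 1) →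
      ∀ m : ℕ, jacNorm α β p (jacPartialSum α β jp g m) ≤ C * jacNorm α β p g)
    (f : ℝ → ℝ)
    (hf : IntegrableOn (fun x : ℝ => iteratedDeriv ℓ f x * jacW α β x)
      (Set.Ioo (-1 : ℝ) 1))
    (hfp : IntegrableOn (fun x : ℝ => |iteratedDeriv ℓ f x| ^ p * jacW α β x)
      (Set.Ioo (-1 : ℝ) 1)) :
    ∀ n : ℕ, sobNorm α β p ℓ ω (sobPartialSum α β ℓ ω q f n) ≤
      max 1 C * sobNorm α β p ℓ ω f :=
  stmt_16_general α β p hp ℓ ω jp q hq_poly hq_low_der hq_low_top hq_high_der hq_high_top C hC f hfp
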